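/- arXiv:0905.4319 — 2 statements merged into one kernel-verified Lean document; each statement's English description precedes it below -/
import Mathlib

section
/- With T, A, μ₀ as above (T Fredholm of index zero, A compact relative to T, T + μ₀A invertible), the resolvent-type family μ ↦ (T + μA)^{-1}, defined on the complement of the discrete set Σ where T + μA fails to be invertible, is a meromorphic operator-valued function of μ on all of ℂ. -/
/-!
Write `T + μ A = (T + μ₀ A)(1 + (μ - μ₀) K)` with `K = (T + μ₀ A)⁻¹ A` compact, so everything
reduces to `μ ↦ (1 + μ K)⁻¹`. On a ball `‖μ‖ < r` split `K = K₀ + P K` with `‖K₀‖ < 1 / r` and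
`P` the orthogonal projection onto the span of a finite net of `K (unit ball)`. Then
`1 + μ K = (1 + μ P K (1 + μ K₀)⁻¹)(1 + μ K₀)`: the second factor is a Neumann series and the
first a finite-rank perturbation of the identity, which is invertible iff a finite determinant
`d μ` does not vanish, with inverse `(d μ)⁻¹` times an analytic operator (adjugate formula).
As `d 0 ≠ 0`, the zeros of `d` are isolated, which gives both the discreteness of `Σ` and the
finite order of the poles.
-/

open Metric Filter Topology ContinuousLinearMap

theorem AnalyticAt.clm_comp {𝕜 E F G X : Type*} [NontriviallyNormedField 𝕜]
    [NormedAddCommGroup E] [NormedSpace 𝕜 E] [NormedAddCommGroup F] [NormedSpace 𝕜 F]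
    [NormedAddCommGroup G] [NormedSpace 𝕜 G] [NormedAddCommGroup X] [NormedSpace 𝕜 X]
    {f : X → F →L[𝕜] G} {g : X → E →L[𝕜] F} {x : X}
    (hf : AnalyticAt 𝕜 f x) (hg : AnalyticAt 𝕜 g x) : AnalyticAt 𝕜 (fun y ↦ f y ∘L g y) x :=
  ((ContinuousLinearMap.compL 𝕜 E F G).analyticAt_bilinear (f x, g x)).comp₂ hf hg

theorem MeromorphicAt.clm_apply {𝕜 E F : Type*} [NontriviallyNormedField 𝕜]
    [NormedAddCommGroup E] [NormedSpace 𝕜 E] [NormedAddCommGroup F] [NormedSpace 𝕜 F]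
    (L : E →L[𝕜] F) {f : 𝕜 → E} {x : 𝕜} (hf : MeromorphicAt f x) :
    MeromorphicAt (fun y ↦ L (f y)) x := by
  obtain ⟨n, hn⟩ := hf
  exact ⟨n, by simpa only [Function.comp_def, map_smul] using (L.analyticAt _).comp hn⟩

theorem isUnit_one_add_of_norm_lt_one {R : Type*} [NormedRing R] [HasSummableGeomSeries R]
    {x : R} (h : ‖x‖ < 1) : IsUnit (1 + x) := by
  rw [← sub_neg_eq_add]
  exact (Units.oneSub (-x) (by rwa [norm_neg])).isUnit

theorem MulEquiv.map_ringInverse {M N : Type*} [MonoidWithZero M] [MonoidWithZero N]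
    (e : M ≃* N) (x : M) : e (Ring.inverse x) = Ring.inverse (e x) := by
  by_cases hx : IsUnit x
  · obtain ⟨u, rfl⟩ := hx
    change _ = Ring.inverse ((Units.map e.toMonoidHom u : Nˣ) : N)
    rw [Ring.inverse_unit, Ring.inverse_unit, ← map_inv]
    rfl
  · rw [Ring.inverse_non_unit _ hx, Ring.inverse_non_unit _ (mt (MulEquiv.isUnit_map e).mp hx),
      map_zero]

section MatrixAnalytic

variable {𝕜 E : Type*} [NontriviallyNormedField 𝕜] [NormedAddCommGroup E] [NormedSpace 𝕜 E]
  {n : Type*} [Fintype n] [DecidableEq n] {M : E → Matrix n n 𝕜} {x : E}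

theorem analyticAt_matrix_det (h : ∀ i j, AnalyticAt 𝕜 (fun y ↦ M y i j) x) :
    AnalyticAt 𝕜 (fun y ↦ (M y).det) x := by
  simp only [Matrix.det_apply']
  fun_prop

theorem analyticAt_matrix_adjugate_apply (h : ∀ i j, AnalyticAt 𝕜 (fun y ↦ M y i j) x)
    (i j : n) : AnalyticAt 𝕜 (fun y ↦ (M y).adjugate i j) x := by
  simp only [Matrix.adjugate_apply]
  refine analyticAt_matrix_det fun k l ↦ ?_
  rcases eq_or_ne k j with rfl | hkj
  · simpa only [Matrix.updateRow_self] using analyticAt_const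
  · simpa only [Matrix.updateRow_ne hkj] using h k l

end MatrixAnalytic

namespace ContinuousLinearMap

section FiniteDimensional

variable {𝕜 V : Type*} [NontriviallyNormedField 𝕜] [CompleteSpace 𝕜]
  [NormedAddCommGroup V] [NormedSpace 𝕜 V] [FiniteDimensional 𝕜 V]

variable (𝕜 V) in
noncomputable def toMatrixAlgEquiv :
    (V →L[𝕜] V) ≃ₐ[𝕜] Matrix (Fin (Module.finrank 𝕜 V)) (Fin (Module.finrank 𝕜 V)) 𝕜 :=
  (Module.End.toContinuousLinearMap V).symm.trans
    (LinearMap.toMatrixAlgEquiv (Module.finBasis 𝕜 V))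

noncomputable def adjugate (X : V →L[𝕜] V) : V →L[𝕜] V :=
  (toMatrixAlgEquiv 𝕜 V).symm (toMatrixAlgEquiv 𝕜 V X).adjugate

theorem analyticAt_toMatrixAlgEquiv_apply (X : V →L[𝕜] V) (i j) :
    AnalyticAt 𝕜 (fun Y ↦ toMatrixAlgEquiv 𝕜 V Y i j) X :=
  (LinearMap.toContinuousLinearMap
    ((Matrix.entryLinearMap 𝕜 𝕜 i j).comp (toMatrixAlgEquiv 𝕜 V).toLinearMap)).analyticAt X

theorem det_eq_det_toMatrixAlgEquiv (X : V →L[𝕜] V) : X.det = (toMatrixAlgEquiv 𝕜 V X).det :=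
  (LinearMap.det_toMatrix (Module.finBasis 𝕜 V) (X : V →ₗ[𝕜] V)).symm

theorem isUnit_iff_det_ne_zero (X : V →L[𝕜] V) : IsUnit X ↔ X.det ≠ 0 := by
  rw [← isUnit_iff_ne_zero, ContinuousLinearMap.det, ← LinearMap.isUnit_iff_isUnit_det,
    ← MulEquiv.isUnit_map (Module.End.toContinuousLinearMap V).symm]
  rfl

theorem analyticAt_det (X : V →L[𝕜] V) : AnalyticAt 𝕜 ContinuousLinearMap.det X := by
  rw [show ContinuousLinearMap.det = fun Y : V →L[𝕜] V ↦ (toMatrixAlgEquiv 𝕜 V Y).det from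
    funext det_eq_det_toMatrixAlgEquiv]
  exact analyticAt_matrix_det (analyticAt_toMatrixAlgEquiv_apply X)

theorem analyticAt_adjugate (X : V →L[𝕜] V) : AnalyticAt 𝕜 adjugate X := by
  have hsum : ∀ Y : V →L[𝕜] V, Y.adjugate = ∑ i, ∑ j, (toMatrixAlgEquiv 𝕜 V Y).adjugate i j •
      (toMatrixAlgEquiv 𝕜 V).symm (Matrix.single i j 1) := by
    intro Y
    conv_lhs => rw [adjugate, Matrix.matrix_eq_sum_single (toMatrixAlgEquiv 𝕜 V Y).adjugate]
    simp only [map_sum, ← map_smul, Matrix.smul_single, smul_eq_mul, mul_one]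
  simp only [funext hsum]
  have := analyticAt_matrix_adjugate_apply (analyticAt_toMatrixAlgEquiv_apply X)
  fun_prop

theorem ringInverse_eq_inv_det_smul_adjugate (X : V →L[𝕜] V) :
    Ring.inverse X = X.det⁻¹ • X.adjugate := by
  rw [adjugate, ← map_smul, det_eq_det_toMatrixAlgEquiv, ← Ring.inverse_eq_inv,
    ← Matrix.inv_def, Matrix.nonsing_inv_eq_ringInverse]
  simpa using (MulEquiv.map_ringInverse (toMatrixAlgEquiv 𝕜 V).symm.toMulEquiv
    (toMatrixAlgEquiv 𝕜 V X)).symm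

end FiniteDimensional

variable {𝕜 X Y : Type*} [NontriviallyNormedField 𝕜] [NormedAddCommGroup X] [NormedSpace 𝕜 X]
  [NormedAddCommGroup Y] [NormedSpace 𝕜 Y]

theorem left_inv_eq_right_inv {a : X →L[𝕜] Y} {b c : Y →L[𝕜] X}
    (hba : b ∘L a = ContinuousLinearMap.id 𝕜 X) (hac : a ∘L c = ContinuousLinearMap.id 𝕜 Y) :
    b = c := by
  rw [← comp_id b, ← hac, ← comp_assoc, hba, id_comp]

theorem comp_inverse_of_isUnit {B : X →L[𝕜] Y} {S : Y →L[𝕜] X}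
    (hBS : B ∘L S = ContinuousLinearMap.id 𝕜 Y) (hSB : S ∘L B = ContinuousLinearMap.id 𝕜 X)
    {U : X →L[𝕜] X} (hU : IsUnit U) :
    (B ∘L U) ∘L (Ring.inverse U ∘L S) = ContinuousLinearMap.id 𝕜 Y ∧
      (Ring.inverse U ∘L S) ∘L (B ∘L U) = ContinuousLinearMap.id 𝕜 X := by
  have h₁ : U ∘L Ring.inverse U = ContinuousLinearMap.id 𝕜 X := Ring.mul_inverse_cancel U hU
  have h₂ : Ring.inverse U ∘L U = ContinuousLinearMap.id 𝕜 X := Ring.inverse_mul_cancel U hU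
  constructor
  · rw [comp_assoc, ← comp_assoc U, h₁, id_comp, hBS]
  · rw [comp_assoc, ← comp_assoc S, hSB, id_comp, h₂]

theorem one_add_smul_add_comp_eq_mul {K₀ : X →L[𝕜] X} {j : Y →L[𝕜] X} {F : X →L[𝕜] Y} {μ : 𝕜}
    (hC : IsUnit (1 + μ • K₀)) :
    1 + μ • (K₀ + j ∘L F) = (1 + j ∘L (μ • F ∘L Ring.inverse (1 + μ • K₀))) * (1 + μ • K₀) := by
  have hCC : Ring.inverse (1 + μ • K₀) ∘L (1 + μ • K₀) = 1 := Ring.inverse_mul_cancel _ hC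
  rw [add_mul, one_mul, mul_def, comp_assoc, smul_comp, comp_assoc, hCC, one_def, comp_id,
    comp_smul, smul_add]
  abel

theorem ringInverse_one_add_comp_comm {a : X →L[𝕜] Y} {b : Y →L[𝕜] X}
    (h : IsUnit (1 + a ∘L b)) :
    IsUnit (1 + b ∘L a) ∧ Ring.inverse (1 + b ∘L a) = 1 - b ∘L Ring.inverse (1 + a ∘L b) ∘L a := by
  set P := Ring.inverse (1 + a ∘L b)
  have hP₁ : ∀ y, P y + a (b (P y)) = y := fun y ↦ by
    simpa using congr($(Ring.mul_inverse_cancel _ h) y)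
  have hP₂ : ∀ y, P (y + a (b y)) = y := fun y ↦ by
    simpa using congr($(Ring.inverse_mul_cancel _ h) y)
  let u : (X →L[𝕜] X)ˣ :=
    { val := 1 + b ∘L a
      inv := 1 - b ∘L P ∘L a
      val_inv := by
        ext x
        have := congr(b $(hP₁ (a x)))
        simp only [map_add] at this
        simp only [mul_apply_eq_comp, sub_apply, one_apply_eq_self, comp_apply, add_apply,
          map_sub]
        linear_combination (norm := module) -this
      inv_val := by
        ext x
        have := congr(b $(hP₂ (a x)))
        simp only [map_add] at this
        simp only [mul_apply_eq_comp, add_apply, one_apply_eq_self, comp_apply, sub_apply,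
          map_add]
        linear_combination (norm := module) -this }
  exact ⟨u.isUnit, Ring.inverse_unit u⟩

theorem isUnit_one_add_comp_comm {a : X →L[𝕜] Y} {b : Y →L[𝕜] X} :
    IsUnit (1 + a ∘L b) ↔ IsUnit (1 + b ∘L a) :=
  ⟨fun h ↦ (ringInverse_one_add_comp_comm h).1, fun h ↦ (ringInverse_one_add_comp_comm h).1⟩

variable [CompleteSpace 𝕜] [FiniteDimensional 𝕜 Y] (a : X →L[𝕜] Y) (b : Y →L[𝕜] X)

theorem isUnit_one_add_comp_iff_det_ne_zero : IsUnit (1 + b ∘L a) ↔ (1 + a ∘L b).det ≠ 0 :=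
  isUnit_one_add_comp_comm.trans (isUnit_iff_det_ne_zero _)

-- Valid also when the determinant vanishes: both sides are then `0` (`Ring.inverse`, `0⁻¹`).
theorem ringInverse_one_add_comp_eq_inv_det_smul :
    Ring.inverse (1 + b ∘L a) =
      (1 + a ∘L b).det⁻¹ • ((1 + a ∘L b).det • 1 - b ∘L (1 + a ∘L b).adjugate ∘L a) := by
  set W := 1 + a ∘L b
  by_cases hW : W.det = 0
  · rw [Ring.inverse_non_unit _ fun h ↦ (isUnit_one_add_comp_iff_det_ne_zero a b).mp h hW, hW,
      inv_zero, zero_smul]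
  · rw [(ringInverse_one_add_comp_comm ((isUnit_iff_det_ne_zero W).mpr hW)).2,
      ringInverse_eq_inv_det_smul_adjugate, smul_comp, comp_smul, smul_sub, smul_smul,
      inv_mul_cancel₀ hW, one_smul]

end ContinuousLinearMap

section Hilbert

variable {𝕜 E H : Type*} [RCLike 𝕜] [NormedAddCommGroup E] [NormedSpace 𝕜 E]
  [NormedAddCommGroup H] [InnerProductSpace 𝕜 H]

theorem IsCompactOperator.exists_norm_sub_starProjection_comp_le {K : E →L[𝕜] H}
    (hK : IsCompactOperator K) {ε : ℝ} (hε : 0 < ε) :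
    ∃ (V : Submodule 𝕜 H) (_ : FiniteDimensional 𝕜 V), ‖K - V.starProjection ∘L K‖ ≤ ε := by
  obtain ⟨M, hM, hKM⟩ := hK.image_closedBall_subset_compact 1
  obtain ⟨t, -, ht, hMt⟩ := hM.finite_cover_balls hε
  have : FiniteDimensional 𝕜 (Submodule.span 𝕜 t) := FiniteDimensional.span_of_finite 𝕜 ht
  refine ⟨Submodule.span 𝕜 t, this, ContinuousLinearMap.opNorm_le_of_unit_norm hε.le fun x hx ↦ ?_⟩
  obtain ⟨w, hw, hKw⟩ := Set.mem_iUnion₂.1 (hMt (hKM ⟨x, by simp [hx], rfl⟩))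
  calc ‖K x - (Submodule.span 𝕜 t).starProjection (K x)‖
      ≤ ‖K x - w‖ := by
        rw [Submodule.starProjection_minimal]
        exact ciInf_le (f := fun v : Submodule.span 𝕜 t ↦ ‖K x - v‖)
          ⟨0, Set.forall_mem_range.mpr fun _ ↦ norm_nonneg _⟩ ⟨w, Submodule.subset_span hw⟩
    _ ≤ ε := (mem_ball_iff_norm.mp hKw).le

variable [CompleteSpace H] {K : H →L[𝕜] H}

theorem IsCompactOperator.exists_analyticOnNhd_det_ball (hK : IsCompactOperator K) (r : ℝ) :
    ∃ (d : 𝕜 → 𝕜) (N : 𝕜 → H →L[𝕜] H), AnalyticOnNhd 𝕜 d (ball 0 r) ∧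
      AnalyticOnNhd 𝕜 N (ball 0 r) ∧ ∀ μ ∈ ball (0 : 𝕜) r,
        (IsUnit (1 + μ • K) ↔ d μ ≠ 0) ∧ Ring.inverse (1 + μ • K) = (d μ)⁻¹ • N μ := by
  obtain ⟨V, _, hKV⟩ :=
    hK.exists_norm_sub_starProjection_comp_le (ε := (|r| + 1)⁻¹) (by positivity)
  set K₀ := K - V.starProjection ∘L K
  set j := V.subtypeL
  set F := V.orthogonalProjectionOnto ∘L K
  have hK₀ : K = K₀ + j ∘L F := (sub_add_cancel _ _).symm
  set C : 𝕜 → H →L[𝕜] H := fun μ ↦ 1 + μ • K₀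
  set m : 𝕜 → H →L[𝕜] V := fun μ ↦ μ • F ∘L Ring.inverse (C μ)
  set W : 𝕜 → V →L[𝕜] V := fun μ ↦ 1 + m μ ∘L j
  have hC : ∀ μ ∈ ball (0 : 𝕜) r, IsUnit (C μ) := fun μ hμ ↦ by
    refine isUnit_one_add_of_norm_lt_one ?_
    rw [mem_ball_zero_iff] at hμ
    calc ‖μ • K₀‖ ≤ ‖μ‖ * (|r| + 1)⁻¹ := by rw [norm_smul]; gcongr
      _ < 1 := by
        rw [mul_inv_lt_iff₀ (by positivity)]
        linarith [le_abs_self r]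
  have hCinv : AnalyticOnNhd 𝕜 (fun μ ↦ Ring.inverse (C μ)) (ball 0 r) := fun μ hμ ↦ by
    have := analyticAt_inverse (𝕜 := 𝕜) (hC μ hμ).unit
    rw [IsUnit.unit_spec] at this
    exact this.comp (by fun_prop)
  have hm : AnalyticOnNhd 𝕜 m (ball 0 r) := fun μ hμ ↦
    analyticAt_id.smul (analyticAt_const.clm_comp (hCinv μ hμ))
  have hW : AnalyticOnNhd 𝕜 W (ball 0 r) := fun μ hμ ↦
    analyticAt_const.add ((hm μ hμ).clm_comp analyticAt_const)
  refine ⟨fun μ ↦ (W μ).det,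
    fun μ ↦ Ring.inverse (C μ) * ((W μ).det • 1 - j ∘L (W μ).adjugate ∘L m μ),
    fun μ hμ ↦ (analyticAt_det _).comp (hW μ hμ), fun μ hμ ↦ ?_, fun μ hμ ↦ ?_⟩
  · have hdet := (analyticAt_det _).comp (hW μ hμ)
    have hadj := (analyticAt_adjugate _).comp (hW μ hμ)
    exact (hCinv μ hμ).mul ((hdet.smul analyticAt_const).sub
      (analyticAt_const.clm_comp (hadj.clm_comp (hm μ hμ))))
  · rw [hK₀, one_add_smul_add_comp_eq_mul (hC μ hμ), (hC μ hμ).mul_right_iff,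
      Ring.inverse_mul (.inr (hC μ hμ)), isUnit_one_add_comp_iff_det_ne_zero,
      ringInverse_one_add_comp_eq_inv_det_smul, mul_smul_comm]
    exact ⟨Iff.rfl, rfl⟩

theorem IsCompactOperator.eventually_isUnit_one_add_smul (hK : IsCompactOperator K) (z : 𝕜) :
    ∀ᶠ μ in 𝓝[≠] z, IsUnit (1 + μ • K) := by
  obtain ⟨d, N, hd, -, hdN⟩ := hK.exists_analyticOnNhd_det_ball (‖z‖ + 1)
  have hz : z ∈ ball (0 : 𝕜) (‖z‖ + 1) := by simp
  have h0 : (0 : 𝕜) ∈ ball (0 : 𝕜) (‖z‖ + 1) := mem_ball_self (by positivity)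
  have hd0 : d 0 ≠ 0 := (hdN 0 h0).1.mp (by simp)
  have hdz : ∀ᶠ μ in 𝓝[≠] z, d μ ≠ 0 :=
    (hd z hz).eventually_eq_zero_or_eventually_ne_zero.resolve_left fun h ↦
      hd0 (hd.eqOn_zero_of_preconnected_of_eventuallyEq_zero (convex_ball _ _).isPreconnected
        hz h h0)
  filter_upwards [hdz, eventually_nhdsWithin_of_eventually_nhds (isOpen_ball.mem_nhds hz)]
    with μ hμ hμr
  exact (hdN μ hμr).1.mpr hμ

theorem IsCompactOperator.meromorphicAt_ringInverse_one_add_smul (hK : IsCompactOperator K)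
    (z : 𝕜) : MeromorphicAt (fun μ ↦ Ring.inverse (1 + μ • K)) z := by
  obtain ⟨d, N, hd, hN, hdN⟩ := hK.exists_analyticOnNhd_det_ball (‖z‖ + 1)
  have hz : z ∈ ball (0 : 𝕜) (‖z‖ + 1) := by simp
  refine ((hd z hz).meromorphicAt.inv.smul (hN z hz).meromorphicAt).congr ?_
  filter_upwards [eventually_nhdsWithin_of_eventually_nhds (isOpen_ball.mem_nhds hz)] with μ hμ
  exact (hdN μ hμ).2.symm

end Hilbert

theorem stmt2_general
    {H₁ H : Type*}
    [NormedAddCommGroup H₁] [InnerProductSpace ℂ H₁] [CompleteSpace H₁]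
    [NormedAddCommGroup H] [InnerProductSpace ℂ H] [CompleteSpace H]
    (ι : H₁ →L[ℂ] H) (hι : IsCompactOperator (⇑ι))
    (T : H₁ →L[ℂ] H)
    (A : H →L[ℂ] H) (μ₀ : ℂ)
    (h₀ : ∃ S : H →L[ℂ] H₁,
      (T + μ₀ • A.comp ι).comp S = ContinuousLinearMap.id ℂ H ∧
      S.comp (T + μ₀ • A.comp ι) = ContinuousLinearMap.id ℂ H₁)
    (R : ℂ → H →L[ℂ] H₁)
    (hR : ∀ μ : ℂ,
      (∃ S : H →L[ℂ] H₁,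
        (T + μ • A.comp ι).comp S = ContinuousLinearMap.id ℂ H ∧
        S.comp (T + μ • A.comp ι) = ContinuousLinearMap.id ℂ H₁) →
      ((T + μ • A.comp ι).comp (R μ) = ContinuousLinearMap.id ℂ H ∧
        (R μ).comp (T + μ • A.comp ι) = ContinuousLinearMap.id ℂ H₁)) :
    ∀ z : ℂ, MeromorphicAt R z := by
  obtain ⟨S, hS₁, hS₂⟩ := h₀
  set K := S ∘L A ∘L ι
  have hK : IsCompactOperator K := (hι.clm_comp A).clm_comp S
  have hfac : ∀ μ : ℂ, T + μ • A ∘L ι = (T + μ₀ • A ∘L ι) ∘L (1 + (μ - μ₀) • K) := by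
    intro μ
    rw [comp_add, one_def, comp_id, comp_smul, ← comp_assoc, hS₁, id_comp, add_assoc, ← add_smul,
      add_sub_cancel]
  have hRK : ∀ μ, IsUnit (1 + (μ - μ₀) • K) → R μ = Ring.inverse (1 + (μ - μ₀) • K) ∘L S := by
    intro μ hU
    have hinv := comp_inverse_of_isUnit hS₁ hS₂ hU
    rw [← hfac] at hinv
    exact left_inv_eq_right_inv (hR μ ⟨_, hinv⟩).2 hinv.1
  intro z
  have hU : ∀ᶠ μ in 𝓝[≠] z, IsUnit (1 + (μ - μ₀) • K) :=
    (((hasDerivAt_id z).sub_const μ₀).tendsto_nhdsNE one_ne_zero).eventually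
      (hK.eventually_isUnit_one_add_smul (z - μ₀))
  have hmero : MeromorphicAt (fun μ ↦ Ring.inverse (1 + (μ - μ₀) • K) ∘L S) z :=
    (meromorphicAt_fun_comp_sub_const_iff_meromorphicAt.mpr
      (hK.meromorphicAt_ringInverse_one_add_smul (z - μ₀))).clm_apply ((compL ℂ H H₁ H₁).flip S)
  exact hmero.congr (hU.mono fun μ hμ ↦ (hRK μ hμ).symm)

/-- With `T` Fredholm of index zero, `A` compact relative to
`T` (via the compact embedding `ι`), and `T + μ₀ A` invertible, any function
`R : ℂ → (H →L H₁)` which inverts `T + μ A` whenever an inverse exists is a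
meromorphic operator-valued function of `μ` on all of `ℂ` (finite-order poles
at the discrete set `Σ` where `T + μ A` fails to be invertible). -/
theorem stmt2
    {H₁ H : Type*}
    [NormedAddCommGroup H₁] [InnerProductSpace ℂ H₁] [CompleteSpace H₁]
    [NormedAddCommGroup H] [InnerProductSpace ℂ H] [CompleteSpace H]
    (ι : H₁ →L[ℂ] H) (hι : IsCompactOperator (⇑ι))
    (T : H₁ →L[ℂ] H)
    (hkerfin : FiniteDimensional ℂ (LinearMap.ker (T : H₁ →ₗ[ℂ] H)))
    (hcokerfin : FiniteDimensional ℂ (H ⧸ LinearMap.range (T : H₁ →ₗ[ℂ] H)))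
    (hidx : Module.finrank ℂ (LinearMap.ker (T : H₁ →ₗ[ℂ] H))
      = Module.finrank ℂ (H ⧸ LinearMap.range (T : H₁ →ₗ[ℂ] H)))
    (A : H →L[ℂ] H) (μ₀ : ℂ)
    (h₀ : ∃ S : H →L[ℂ] H₁,
      (T + μ₀ • A.comp ι).comp S = ContinuousLinearMap.id ℂ H ∧
      S.comp (T + μ₀ • A.comp ι) = ContinuousLinearMap.id ℂ H₁)
    (R : ℂ → H →L[ℂ] H₁)
    (hR : ∀ μ : ℂ,
      (∃ S : H →L[ℂ] H₁,
        (T + μ • A.comp ι).comp S = ContinuousLinearMap.id ℂ H ∧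
        S.comp (T + μ • A.comp ι) = ContinuousLinearMap.id ℂ H₁) →
      ((T + μ • A.comp ι).comp (R μ) = ContinuousLinearMap.id ℂ H ∧
        (R μ).comp (T + μ • A.comp ι) = ContinuousLinearMap.id ℂ H₁)) :
    ∀ z : ℂ, MeromorphicAt R z :=
  stmt2_general ι hι T A μ₀ h₀ R hR
end

section
/- With notation as above, if μ_j is a pole of R_μ = (T + μA)^{-1} of order m with Laurent coefficients A_{−1},…,A_{−m}, then rank(A_{−1}) ≤ d(μ_j), where d(μ_j) is the dimension of the space of tuples (b_{−1},…,b_{−m}) solving the chain: D_{μ_j} b_{−1} = −A b_{−2}, …, D_{μ_j} b_{−m+1} = −A b_{−m}, D_{μ_j} b_{−m} = 0. -/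
/-!
Put `D = T + μⱼA`, so that `T + μA = D + (μ − μⱼ)A`. This pencil sends a principal part
`∑_{ℓ=1}^m (μ − μⱼ)^{−ℓ} b_{−ℓ}` to the principal part with coefficients `D b_{−ℓ} + A b_{−ℓ−1}`
(where `b_{−m−1} = 0`) plus the constant `A b_{−1}`. In `(T + μA) R_μ y = y` everything except
that principal part is continuous at `μⱼ`, and a principal part continuous at its pole vanishes;
hence `(A_{−1}y, …, A_{−m}y)` solves the chain for every `y`. Projecting the solution space to
the first entry therefore covers the range of `A_{−1}`.
-/

/-- The linear map whose kernel is the space of solution tuples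
`(b_{−1}, …, b_{−m})` of the chain
`D b_{−1} = −A' b_{−2}, …, D b_{−m+1} = −A' b_{−m}, D b_{−m} = 0`
(here `b i` stands for `b_{−(i+1)}`). -/
def chainMap {E F : Type*} [NormedAddCommGroup E] [NormedSpace ℂ E]
    [NormedAddCommGroup F] [NormedSpace ℂ F]
    (m : ℕ) (D A' : E →L[ℂ] F) : (Fin m → E) →ₗ[ℂ] (Fin m → F) where
  toFun b := fun i =>
    D (b i) + (if h : (i : ℕ) + 1 < m then A' (b ⟨(i : ℕ) + 1, h⟩) else 0)
  map_add' x y := by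
    funext i
    by_cases h : (i : ℕ) + 1 < m <;> simp [h, map_add] <;> abel
  map_smul' c x := by
    funext i
    by_cases h : (i : ℕ) + 1 < m <;> simp [h, map_smul, smul_add]

open Filter Topology Finset

section PrincipalPart

variable {𝕜 V : Type*} [Field 𝕜] [AddCommGroup V] [Module 𝕜 V]

def principalPart (z₀ : 𝕜) (n : ℕ) (c : ℕ → V) (z : 𝕜) : V :=
  ∑ k ∈ range n, (z - z₀) ^ (-(k : ℤ) - 1) • c k

lemma principalPart_succ {z₀ z : 𝕜} (hz : z ≠ z₀) (n : ℕ) (c : ℕ → V) :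
    principalPart z₀ (n + 1) c z =
      (z - z₀)⁻¹ • (principalPart z₀ n (fun k => c (k + 1)) z + c 0) := by
  have hz' : z - z₀ ≠ 0 := sub_ne_zero.mpr hz
  simp only [principalPart, sum_range_succ', smul_add, smul_sum, smul_smul]
  congr 1
  · refine sum_congr rfl fun k _ => ?_
    rw [← zpow_neg_one, ← zpow_add₀ hz']
    push_cast
    ring_nf
  · simp

lemma pencil_apply_principalPart {E F : Type*} [AddCommGroup E] [Module 𝕜 E]
    [AddCommGroup F] [Module 𝕜 F] (D A : E →ₗ[𝕜] F) {z₀ z : 𝕜} (hz : z ≠ z₀)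
    {m : ℕ} {v : ℕ → E} (hv : v m = 0) :
    D (principalPart z₀ m v z) + (z - z₀) • A (principalPart z₀ m v z) =
      principalPart z₀ m (fun k => D (v k) + A (v (k + 1))) z + A (v 0) := by
  have hz' : z - z₀ ≠ 0 := sub_ne_zero.mpr hz
  have hshift : ∑ k ∈ range m, ((z - z₀) * (z - z₀) ^ (-(k : ℤ) - 1)) • A (v k) =
      ∑ k ∈ range m, (z - z₀) ^ (-(k : ℤ) - 1) • A (v (k + 1)) + A (v 0) := by
    have hlower (k : ℕ) : (z - z₀) * (z - z₀) ^ (-(k : ℤ) - 1) = (z - z₀) ^ (-(k : ℤ)) := by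
      rw [mul_comm, ← zpow_add_one₀ hz']
      ring_nf
    have hextend : ∑ k ∈ range m, (z - z₀) ^ (-(k : ℤ)) • A (v k) =
        ∑ k ∈ range (m + 1), (z - z₀) ^ (-(k : ℤ)) • A (v k) := by
      rw [sum_range_succ, hv, map_zero, smul_zero, add_zero]
    simp_rw [hlower]
    rw [hextend, sum_range_succ']
    simp only [Nat.cast_add, Nat.cast_one, neg_add', Nat.cast_zero, neg_zero, zpow_zero,
      one_smul]
  simp only [principalPart, map_sum, map_smul, smul_sum, smul_smul, smul_add, sum_add_distrib,
    hshift, add_assoc]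

end PrincipalPart

lemma eq_zero_of_principalPart_add_eq_zero {𝕜 V : Type*} [NontriviallyNormedField 𝕜]
    [NormedAddCommGroup V] [NormedSpace 𝕜 V] {z₀ : 𝕜} (n : ℕ) {c : ℕ → V} {g : 𝕜 → V}
    (hg : ContinuousAt g z₀) (h : ∀ᶠ z in 𝓝[≠] z₀, principalPart z₀ n c z + g z = 0) :
    ∀ k < n, c k = 0 := by
  induction n generalizing c g with
  | zero => simp
  | succ n ih =>
    set g' : 𝕜 → V := fun z => c 0 + (z - z₀) • g z
    have hg' : ContinuousAt g' z₀ :=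
      continuousAt_const.add ((continuousAt_id.sub continuousAt_const).smul hg)
    have h' : ∀ᶠ z in 𝓝[≠] z₀, principalPart z₀ n (fun k => c (k + 1)) z + g' z = 0 := by
      filter_upwards [h, self_mem_nhdsWithin] with z hz hne
      have hz' : z - z₀ ≠ 0 := sub_ne_zero.mpr hne
      rw [principalPart_succ hne] at hz
      have := congrArg ((z - z₀) • ·) hz
      simpa only [smul_add, smul_smul, mul_inv_cancel₀ hz', one_smul, smul_zero, g',
        add_assoc] using this
    have htail := ih hg' h'
    have hg'_eq : ∀ᶠ z in 𝓝[≠] z₀, g' z = 0 := by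
      filter_upwards [h'] with z hz
      rwa [principalPart, sum_eq_zero fun k hk => by rw [htail k (mem_range.mp hk), smul_zero],
        zero_add] at hz
    have hc₀ : c 0 = 0 := by
      have hlim : Tendsto g' (𝓝[≠] z₀) (𝓝 (g' z₀)) := hg'.continuousWithinAt.tendsto
      simpa [g'] using tendsto_nhds_unique hlim (tendsto_const_nhds.congr' (hg'_eq.mono
        fun _ hz => hz.symm))
    rintro (_ | k) hk
    · exact hc₀
    · exact htail k (by omega)

lemma chainMap_apply_of_eq_zero {E F : Type*} [NormedAddCommGroup E] [NormedSpace ℂ E]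
    [NormedAddCommGroup F] [NormedSpace ℂ F] {m : ℕ} (D A : E →L[ℂ] F) {v : ℕ → E}
    (hv : v m = 0) (i : Fin m) :
    chainMap m D A (fun i => v i) i = D (v i) + A (v (i + 1)) := by
  show D (v i) + (if h : (i : ℕ) + 1 < m then A (v ((i : ℕ) + 1)) else 0) = _
  split_ifs with h
  · rfl
  · rw [show (i : ℕ) + 1 = m by omega, hv, map_zero]

lemma coeff_eq_zero_of_pencil_apply_principalPart {𝕜 E F : Type*} [NontriviallyNormedField 𝕜]
    [NormedAddCommGroup E] [NormedSpace 𝕜 E] [NormedAddCommGroup F] [NormedSpace 𝕜 F]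
    (T A : E →L[𝕜] F) {z₀ : 𝕜} {m : ℕ} {v : ℕ → E} (hv : v m = 0) {g : 𝕜 → E}
    (hg : ContinuousAt g z₀) (y : F)
    (h : ∀ᶠ z in 𝓝[≠] z₀, (T + z • A) (principalPart z₀ m v z + g z) = y) :
    ∀ k < m, (T + z₀ • A) (v k) + A (v (k + 1)) = 0 := by
  refine eq_zero_of_principalPart_add_eq_zero (z₀ := z₀) m
    (g := fun z => A (v 0) + (T + z • A) (g z) - y) ?_ ?_
  · refine (continuousAt_const.add (ContinuousAt.clm_apply ?_ hg)).sub continuousAt_const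
    exact continuousAt_const.add (continuousAt_id.smul continuousAt_const)
  filter_upwards [h, self_mem_nhdsWithin] with z hz hne
  have hsplit : T + z • A = (T + z₀ • A) + (z - z₀) • A := by
    rw [sub_smul]
    abel
  have hpencil := pencil_apply_principalPart ((T + z₀ • A : E →L[𝕜] F) : E →ₗ[𝕜] F)
    (A : E →ₗ[𝕜] F) hne hv
  simp only [ContinuousLinearMap.coe_coe] at hpencil
  calc principalPart z₀ m (fun k => (T + z₀ • A) (v k) + A (v (k + 1))) z
        + (A (v 0) + (T + z • A) (g z) - y)
      = (principalPart z₀ m (fun k => (T + z₀ • A) (v k) + A (v (k + 1))) z + A (v 0))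
          + (T + z • A) (g z) - y := by abel
    _ = (T + z • A) (principalPart z₀ m v z) + (T + z • A) (g z) - y := by
        rw [← hpencil, hsplit]
        simp only [add_apply, smul_apply]
    _ = 0 := by rw [← map_add, hz, sub_self]

lemma laurentCoeff_apply_mem_ker_chainMap {E F : Type*} [NormedAddCommGroup E]
    [NormedSpace ℂ E] [NormedAddCommGroup F] [NormedSpace ℂ F] (T A : E →L[ℂ] F) (μj : ℂ)
    (R : ℂ → F →L[ℂ] E) (m : ℕ) (B : ℕ → F →L[ℂ] E) (G : ℂ → F →L[ℂ] E)
    (hG : ContinuousAt G μj)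
    (hrep : ∀ᶠ μ in 𝓝[≠] μj,
      R μ = (∑ p ∈ range m, ((μ - μj) ^ (-(p : ℤ) - 1)) • B (p + 1)) + G μ)
    (hinv : ∀ᶠ μ in 𝓝[≠] μj, (T + μ • A).comp (R μ) = ContinuousLinearMap.id ℂ F) (y : F) :
    (fun i : Fin m => B (i + 1) y) ∈ LinearMap.ker (chainMap m (T + μj • A) A) := by
  set v : ℕ → E := fun k => if k < m then B (k + 1) y else 0
  have hv : v m = 0 := if_neg (lt_irrefl m)
  have hsolve : ∀ᶠ μ in 𝓝[≠] μj, (T + μ • A) (principalPart μj m v μ + G μ y) = y := by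
    filter_upwards [hrep, hinv] with μ hR hI
    have hP : principalPart μj m v μ =
        (∑ p ∈ range m, (μ - μj) ^ (-(p : ℤ) - 1) • B (p + 1)) y := by
      simp only [principalPart, _root_.sum_apply, smul_apply]
      exact sum_congr rfl fun p hp => by simp only [v, if_pos (mem_range.mp hp)]
    rw [hP, ← add_apply, ← hR]
    simpa using congrArg (fun L : F →L[ℂ] F => L y) hI
  have hcoeff := coeff_eq_zero_of_pencil_apply_principalPart T A hv
    (hG.clm_apply continuousAt_const) y hsolve
  have htuple : (fun i : Fin m => B (i + 1) y) = fun i : Fin m => v i :=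
    funext fun i => (if_pos i.isLt).symm
  rw [LinearMap.mem_ker, htuple]
  funext i
  rw [chainMap_apply_of_eq_zero _ _ hv]
  exact hcoeff i i.isLt

/-- If `μⱼ` is a pole of `R_μ = (T + μA)⁻¹` of order `m` with
Laurent coefficients `A_{−1} = B 1, …, A_{−m} = B m`, then
`rank A_{−1} ≤ d(μⱼ)`, where `d(μⱼ)` is the dimension of the space of tuples
`(b_{−1}, …, b_{−m})` solving the chain
`D_{μⱼ} b_{−1} = −A b_{−2}, …, D_{μⱼ} b_{−m} = 0`. -/
theorem stmt8
    {E F : Type*} [NormedAddCommGroup E] [NormedSpace ℂ E]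
    [NormedAddCommGroup F] [NormedSpace ℂ F]
    (T A : E →L[ℂ] F) (μj : ℂ)
    (R : ℂ → F →L[ℂ] E)
    (m : ℕ) (hm : 0 < m)
    (B : ℕ → F →L[ℂ] E)
    (G : ℂ → F →L[ℂ] E) (hG : AnalyticAt ℂ G μj)
    (hrep : ∀ᶠ μ in nhdsWithin μj {μj}ᶜ,
      R μ = (∑ p ∈ Finset.range m, ((μ - μj) ^ (-(p : ℤ) - 1)) • B (p + 1)) + G μ)
    (hinv : ∀ᶠ μ in nhdsWithin μj {μj}ᶜ,
      (T + μ • A).comp (R μ) = ContinuousLinearMap.id ℂ F) :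
    Module.rank ℂ (LinearMap.range (B 1 : F →ₗ[ℂ] E))
      ≤ Module.rank ℂ (LinearMap.ker (chainMap m (T + μj • A) A)) := by
  have hfirst : LinearMap.range (B 1 : F →ₗ[ℂ] E) ≤
      (LinearMap.ker (chainMap m (T + μj • A) A)).map (LinearMap.proj ⟨0, hm⟩) := by
    rintro _ ⟨y, rfl⟩
    exact ⟨_, laurentCoeff_apply_mem_ker_chainMap T A μj R m B G hG.continuousAt hrep hinv y, rfl⟩
  exact (Submodule.rank_mono hfirst).trans (rank_map_le _ _)
end
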